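/- arXiv:1205.4101 — 3 statements merged into one kernel-verified Lean document; each statement's English description precedes it below -/
import Mathlib

section
/- Let F be a field of characteristic 0 and let x*_i = x_i + x_{i,ε}ε ∈ (F[ε]₂)³, i = 0,…,4, be five points in generic position, i.e. Δ(x_i,x_j,x_k) ≠ 0 for all distinct i, j, k. Then the element Σ_{i=0}^{4} (−1)^i ⟨ r(x_i | x₀,…,x̂_i,…,x₄) ; r_ε(x*_i | x*₀,…,x̂*_i,…,x*₄) ] of ℤ[F[ε]₂] lies in the five-term subgroup R (projected five-term relation in TB₂(F)). -/
noncomputable section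
open Polynomial

/-- The 3×3 determinant of the matrix with columns `u, v, w`. -/
def det3 {R : Type*} [CommRing R] (u v w : Fin 3 → R) : R :=
  Matrix.det (Matrix.of fun i j => ![u, v, w] j i)

/-- The truncated polynomial ring `F[ε]_ν := F[ε]/(ε^ν)`; `ν = 2` gives the dual numbers. -/
abbrev TruncPoly (F : Type*) [CommRing F] (ν : ℕ) : Type _ := AdjoinRoot ((X : F[X]) ^ ν)

/-- `ε ∈ F[ε]_ν`. -/
def tEps (F : Type*) [CommRing F] (ν : ℕ) : TruncPoly F ν := AdjoinRoot.root _

/-- The inclusion `F → F[ε]_ν`. -/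
def tIncl (F : Type*) [CommRing F] (ν : ℕ) : F →+* TruncPoly F ν := AdjoinRoot.of _

/-- The coefficient of `ε^r` of an element of `F[ε]_ν`. -/
def tCoeff {F : Type*} [CommRing F] {ν : ℕ} (x : TruncPoly F ν) (r : ℕ) : F :=
  ((AdjoinRoot.modByMonicHom (monic_X_pow ν)) x).coeff r

/-- The dual point `x + x'·ε ∈ (F[ε]₂)³`. -/
def dualPt {F : Type*} [CommRing F] (x x' : Fin 3 → F) : Fin 3 → TruncPoly F 2 :=
  fun k => tIncl F 2 (x k) + tIncl F 2 (x' k) * tEps F 2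

/-- The projected cross-ratio
`r(y₀|y₁,y₂,y₃,y₄) := Δ(y₀,y₁,y₄)Δ(y₀,y₂,y₃)/(Δ(y₀,y₁,y₃)Δ(y₀,y₂,y₄))` over a field. -/
def projCr {F : Type*} [Field F] (y0 y1 y2 y3 y4 : Fin 3 → F) : F :=
  det3 y0 y1 y4 * det3 y0 y2 y3 / (det3 y0 y1 y3 * det3 y0 y2 y4)

/-- The projected cross-ratio over `F[ε]₂` (same formula with dual-number determinants). -/
def projCrDual {F : Type*} [Field F] (y0 y1 y2 y3 y4 : Fin 3 → TruncPoly F 2) :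
    TruncPoly F 2 :=
  det3 y0 y1 y4 * det3 y0 y2 y3 * Ring.inverse (det3 y0 y1 y3 * det3 y0 y2 y4)

/-- `ℤ[F[ε]₂]`, the free abelian group on the set `F[ε]₂`. -/
abbrev ZDual (F : Type*) [CommRing F] := FreeAbelianGroup (TruncPoly F 2)

/-- `⟨a;a'] := [a + a'ε] − [a] ∈ ℤ[F[ε]₂]`. -/
def bracket (F : Type*) [CommRing F] (a a' : F) : ZDual F :=
  FreeAbelianGroup.of (tIncl F 2 a + tIncl F 2 a' * tEps F 2)
    - FreeAbelianGroup.of (tIncl F 2 a)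

/-- The subgroup `R ⊆ ℤ[F[ε]₂]` generated by the five-term elements. -/
def fiveTermSubgroup (F : Type*) [Field F] : AddSubgroup (ZDual F) :=
  AddSubgroup.closure { z | ∃ a b a' b' : F, a ≠ 0 ∧ a ≠ 1 ∧ b ≠ 0 ∧ b ≠ 1 ∧ a ≠ b ∧
    z = bracket F a a' - bracket F b b'
        + bracket F (b / a) ((a * b' - a' * b) / a ^ 2)
        - bracket F ((1 - b) / (1 - a)) (((1 - b) * a' - (1 - a) * b') / (1 - a) ^ 2)
        + bracket F (a * (1 - b) / (b * (1 - a)))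
            ((b * (1 - b) * a' - a * (1 - a) * b') / (b * (1 - a)) ^ 2) }

/-!
In Mathlib's dual numbers `F[ε]`, write `[z]` for `⟨z.fst; z.snd]`. The five-term generator
attached to `A = a + a'ε`, `B = b + b'ε` is then
`[A] - [B] + [B/A] - [(1-B)/(1-A)] + [A(1-B)/(B(1-A))]`, computed in `F[ε]`.

The five projected cross-ratios `ρᵢ` of points in general position over any commutative ring
satisfy, by the Plücker relations among the ten determinants,
`ρ₂ = ρ₁/ρ₀`, `ρ₃ = ρ₁(1-ρ₀)/(ρ₀(1-ρ₁))` and `ρ₄ = (1-ρ₀)/(1-ρ₁)`.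
So for dual points the alternating sum is the generator for `(ρ₀, ρ₁)`, except that the last two
terms are replaced by their inverses. It remains to see that `[z] + [z⁻¹] ∈ R`. Two generators
show that this element changes by an element of `R` when `z` is multiplied by a constant of `F`,
and two more show that it lies in `R` when `z` is a square `g²`. In characteristic zero every `z`
is a constant multiple of such a square.
-/

open TrivSqZeroExt DualNumber

namespace TruncPoly

variable {F : Type*} [CommRing F]

theorem eq_tIncl_add_tIncl_mul_tEps (z : TruncPoly F 2) :
    z = tIncl F 2 (tCoeff z 0) + tIncl F 2 (tCoeff z 1) * tEps F 2 := by
  obtain ⟨f, rfl⟩ := AdjoinRoot.mk_surjective z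
  have hdeg : (f %ₘ X ^ 2).degree ≤ 1 := by
    nontriviality F
    exact Order.le_of_lt_succ
      ((degree_modByMonic_lt f (monic_X_pow 2)).trans_le (degree_X_pow_le 2))
  conv_lhs => rw [← AdjoinRoot.mk_leftInverse (monic_X_pow 2) (AdjoinRoot.mk _ f),
    AdjoinRoot.modByMonicHom_mk, eq_X_add_C_of_degree_le_one hdeg]
  simp [tCoeff, tIncl, tEps, add_comm]

def toDualNumber : TruncPoly F 2 →+* DualNumber F :=
  AdjoinRoot.lift (inlHom F F) ε (by simp [eps_pow_two])

theorem toDualNumber_tIncl_add (a b : F) :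
    toDualNumber (tIncl F 2 a + tIncl F 2 b * tEps F 2) = inl a + inr b := by
  simp only [toDualNumber, tIncl, tEps, map_add, map_mul, AdjoinRoot.lift_of, AdjoinRoot.lift_root]
  ext <;> simp

theorem fst_toDualNumber (z : TruncPoly F 2) : (toDualNumber z).fst = tCoeff z 0 := by
  conv_lhs => rw [eq_tIncl_add_tIncl_mul_tEps z, toDualNumber_tIncl_add]
  simp

theorem snd_toDualNumber (z : TruncPoly F 2) : (toDualNumber z).snd = tCoeff z 1 := by
  conv_lhs => rw [eq_tIncl_add_tIncl_mul_tEps z, toDualNumber_tIncl_add]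
  simp

theorem toDualNumber_bijective : Function.Bijective (toDualNumber (F := F)) := by
  refine ⟨(injective_iff_map_eq_zero _).2 fun z hz => ?_,
    fun w => ⟨_, (toDualNumber_tIncl_add w.fst w.snd).trans (inl_fst_add_inr_snd_eq w)⟩⟩
  rw [eq_tIncl_add_tIncl_mul_tEps z, ← fst_toDualNumber, ← snd_toDualNumber, hz]
  simp

def dualNumberEquiv : TruncPoly F 2 ≃+* DualNumber F :=
  RingEquiv.ofBijective toDualNumber toDualNumber_bijective

theorem dualNumberEquiv_dualPt (v v' : Fin 3 → F) (k : Fin 3) :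
    dualNumberEquiv (dualPt v v' k) = inl (v k) + inr (v' k) :=
  toDualNumber_tIncl_add (v k) (v' k)

end TruncPoly

section CrossRatio

variable {R S : Type*} [CommRing R] [CommRing S]

theorem det3_expand (u v w : Fin 3 → R) :
    det3 u v w = u 0 * (v 1 * w 2 - v 2 * w 1) - v 0 * (u 1 * w 2 - u 2 * w 1)
      + w 0 * (u 1 * v 2 - u 2 * v 1) := by
  simp [det3, Matrix.det_fin_three]
  ring

theorem det3_swap (u v w : Fin 3 → R) : det3 v u w = -det3 u v w := by
  simp only [det3_expand]; ring

theorem det3_rotate (u v w : Fin 3 → R) : det3 w u v = det3 u v w := by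
  simp only [det3_expand]; ring

theorem det3_plucker (v₀ v₁ v₂ v₃ v₄ : Fin 3 → R) :
    det3 v₀ v₁ v₂ * det3 v₀ v₃ v₄ - det3 v₀ v₁ v₃ * det3 v₀ v₂ v₄
      + det3 v₀ v₁ v₄ * det3 v₀ v₂ v₃ = 0 := by
  simp only [det3_expand]; ring

theorem map_det3 (f : R →+* S) (u v w : Fin 3 → R) :
    f (det3 u v w) = det3 (f ∘ u) (f ∘ v) (f ∘ w) := by
  simp only [det3_expand, map_add, map_sub, map_mul, Function.comp_apply]

def crossRatio (y₀ y₁ y₂ y₃ y₄ : Fin 3 → R) : R :=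
  det3 y₀ y₁ y₄ * det3 y₀ y₂ y₃ * Ring.inverse (det3 y₀ y₁ y₃ * det3 y₀ y₂ y₄)

theorem projCr_eq_crossRatio {F : Type*} [Field F] (y₀ y₁ y₂ y₃ y₄ : Fin 3 → F) :
    projCr y₀ y₁ y₂ y₃ y₄ = crossRatio y₀ y₁ y₂ y₃ y₄ := by
  rw [projCr, crossRatio, Ring.inverse_eq_inv', div_eq_mul_inv]

theorem projCrDual_eq_crossRatio {F : Type*} [Field F] (y₀ y₁ y₂ y₃ y₄ : Fin 3 → TruncPoly F 2) :
    projCrDual y₀ y₁ y₂ y₃ y₄ = crossRatio y₀ y₁ y₂ y₃ y₄ :=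
  rfl

variable {y₀ y₁ y₂ y₃ y₄ : Fin 3 → R}

theorem crossRatio_mul (h : IsUnit (det3 y₀ y₁ y₃ * det3 y₀ y₂ y₄)) :
    crossRatio y₀ y₁ y₂ y₃ y₄ * (det3 y₀ y₁ y₃ * det3 y₀ y₂ y₄)
      = det3 y₀ y₁ y₄ * det3 y₀ y₂ y₃ :=
  Ring.inverse_mul_cancel_right _ _ h

theorem one_sub_crossRatio_mul (h : IsUnit (det3 y₀ y₁ y₃ * det3 y₀ y₂ y₄)) :
    (1 - crossRatio y₀ y₁ y₂ y₃ y₄) * (det3 y₀ y₁ y₃ * det3 y₀ y₂ y₄)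
      = det3 y₀ y₁ y₂ * det3 y₀ y₃ y₄ := by
  linear_combination -crossRatio_mul h - det3_plucker y₀ y₁ y₂ y₃ y₄

theorem map_crossRatio (f : R →+* S) (h : IsUnit (det3 y₀ y₁ y₃ * det3 y₀ y₂ y₄)) :
    f (crossRatio y₀ y₁ y₂ y₃ y₄) = crossRatio (f ∘ y₀) (f ∘ y₁) (f ∘ y₂) (f ∘ y₃) (f ∘ y₄) := by
  have hf := h.map f
  rw [map_mul, map_det3, map_det3] at hf
  refine (Ring.eq_mul_inverse_iff_mul_eq _ _ _ hf).2 ?_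
  simp only [← map_det3, ← map_mul, crossRatio_mul h]

end CrossRatio

section FivePoints

variable {ι R S : Type*} [CommRing R] [CommRing S]

def InGeneralPosition (y : ι → Fin 3 → R) : Prop :=
  ∀ i j k, i ≠ j → i ≠ k → j ≠ k → IsUnit (det3 (y i) (y j) (y k))

theorem InGeneralPosition.map {y : ι → Fin 3 → R} (hy : InGeneralPosition y) (f : R →+* S) :
    InGeneralPosition fun i => f ∘ y i := fun i j k hij hik hjk => by
  rw [← map_det3]
  exact (hy i j k hij hik hjk).map f

def crossRatioAt (y : Fin 5 → Fin 3 → R) (i : Fin 5) : R :=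
  crossRatio (y i) (y (i.succAbove 0)) (y (i.succAbove 1)) (y (i.succAbove 2)) (y (i.succAbove 3))

namespace InGeneralPosition

variable {y : Fin 5 → Fin 3 → R} (hy : InGeneralPosition y)
include hy

theorem isUnit_det3_succAbove (i : Fin 5) {a b : Fin 4} (hab : a ≠ b) :
    IsUnit (det3 (y i) (y (i.succAbove a)) (y (i.succAbove b))) :=
  hy _ _ _ (Fin.succAbove_ne i a).symm (Fin.succAbove_ne i b).symm
    (Fin.succAbove_right_injective.ne hab)

theorem isUnit_denom (i : Fin 5) :
    IsUnit (det3 (y i) (y (i.succAbove 0)) (y (i.succAbove 2))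
      * det3 (y i) (y (i.succAbove 1)) (y (i.succAbove 3))) :=
  (hy.isUnit_det3_succAbove i (by decide)).mul (hy.isUnit_det3_succAbove i (by decide))

theorem map_crossRatioAt (f : R →+* S) (i : Fin 5) :
    f (crossRatioAt y i) = crossRatioAt (fun j => f ∘ y j) i :=
  map_crossRatio f (hy.isUnit_denom i)

theorem isUnit_crossRatioAt (i : Fin 5) : IsUnit (crossRatioAt y i) := by
  have h := (hy.isUnit_det3_succAbove i (a := 0) (b := 3) (by decide)).mul
    (hy.isUnit_det3_succAbove i (a := 1) (b := 2) (by decide))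
  rw [← crossRatio_mul (hy.isUnit_denom i)] at h
  exact isUnit_of_mul_isUnit_left h

theorem isUnit_one_sub_crossRatioAt (i : Fin 5) : IsUnit (1 - crossRatioAt y i) := by
  have h := (hy.isUnit_det3_succAbove i (a := 0) (b := 1) (by decide)).mul
    (hy.isUnit_det3_succAbove i (a := 2) (b := 3) (by decide))
  rw [← one_sub_crossRatio_mul (hy.isUnit_denom i)] at h
  exact isUnit_of_mul_isUnit_left h

theorem crossRatioAt_mul_det3 :
    crossRatioAt y 0 * (det3 (y 0) (y 1) (y 3) * det3 (y 0) (y 2) (y 4))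
      = det3 (y 0) (y 1) (y 4) * det3 (y 0) (y 2) (y 3) ∧
    crossRatioAt y 1 * (det3 (y 0) (y 1) (y 3) * det3 (y 1) (y 2) (y 4))
      = det3 (y 0) (y 1) (y 4) * det3 (y 1) (y 2) (y 3) ∧
    crossRatioAt y 2 * (det3 (y 0) (y 2) (y 3) * det3 (y 1) (y 2) (y 4))
      = det3 (y 0) (y 2) (y 4) * det3 (y 1) (y 2) (y 3) ∧
    crossRatioAt y 3 * (det3 (y 0) (y 2) (y 3) * det3 (y 1) (y 3) (y 4))
      = det3 (y 0) (y 3) (y 4) * det3 (y 1) (y 2) (y 3) ∧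
    crossRatioAt y 4 * (det3 (y 0) (y 2) (y 4) * det3 (y 1) (y 3) (y 4))
      = det3 (y 0) (y 3) (y 4) * det3 (y 1) (y 2) (y 4) := by
  have h₁ : crossRatioAt y 1 * (det3 (y 1) (y 0) (y 3) * det3 (y 1) (y 2) (y 4))
      = det3 (y 1) (y 0) (y 4) * det3 (y 1) (y 2) (y 3) := crossRatio_mul (hy.isUnit_denom 1)
  have h₂ : crossRatioAt y 2 * (det3 (y 2) (y 0) (y 3) * det3 (y 2) (y 1) (y 4))
      = det3 (y 2) (y 0) (y 4) * det3 (y 2) (y 1) (y 3) := crossRatio_mul (hy.isUnit_denom 2)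
  have h₃ : crossRatioAt y 3 * (det3 (y 3) (y 0) (y 2) * det3 (y 3) (y 1) (y 4))
      = det3 (y 3) (y 0) (y 4) * det3 (y 3) (y 1) (y 2) := crossRatio_mul (hy.isUnit_denom 3)
  have h₄ : crossRatioAt y 4 * (det3 (y 4) (y 0) (y 2) * det3 (y 4) (y 1) (y 3))
      = det3 (y 4) (y 0) (y 3) * det3 (y 4) (y 1) (y 2) := crossRatio_mul (hy.isUnit_denom 4)
  rw [det3_swap (y 0) (y 1), det3_swap (y 0) (y 1)] at h₁
  rw [det3_swap (y 0) (y 2), det3_swap (y 1) (y 2), det3_swap (y 0) (y 2),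
    det3_swap (y 1) (y 2)] at h₂
  rw [det3_rotate (y 0) (y 2) (y 3), det3_swap (y 1) (y 3), det3_swap (y 0) (y 3),
    det3_rotate (y 1) (y 2) (y 3)] at h₃
  rw [det3_rotate (y 0) (y 2) (y 4), det3_rotate (y 1) (y 3) (y 4), det3_rotate (y 0) (y 3) (y 4),
    det3_rotate (y 1) (y 2) (y 4)] at h₄
  exact ⟨crossRatio_mul (hy.isUnit_denom 0), by linear_combination -h₁, by linear_combination h₂,
    by linear_combination -h₃, h₄⟩

theorem one_sub_crossRatioAt_mul_det3 :
    (1 - crossRatioAt y 0) * (det3 (y 0) (y 1) (y 3) * det3 (y 0) (y 2) (y 4))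
      = det3 (y 0) (y 1) (y 2) * det3 (y 0) (y 3) (y 4) ∧
    (1 - crossRatioAt y 1) * (det3 (y 0) (y 1) (y 3) * det3 (y 1) (y 2) (y 4))
      = det3 (y 0) (y 1) (y 2) * det3 (y 1) (y 3) (y 4) := by
  have h₁ : (1 - crossRatioAt y 1) * (det3 (y 1) (y 0) (y 3) * det3 (y 1) (y 2) (y 4))
      = det3 (y 1) (y 0) (y 2) * det3 (y 1) (y 3) (y 4) :=
    one_sub_crossRatio_mul (hy.isUnit_denom 1)
  rw [det3_swap (y 0) (y 1), det3_swap (y 0) (y 1)] at h₁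
  exact ⟨one_sub_crossRatio_mul (hy.isUnit_denom 0), by linear_combination -h₁⟩

theorem crossRatioAt_relations :
    crossRatioAt y 2 * crossRatioAt y 0 = crossRatioAt y 1 ∧
    crossRatioAt y 3 * (crossRatioAt y 0 * (1 - crossRatioAt y 1))
      = crossRatioAt y 1 * (1 - crossRatioAt y 0) ∧
    crossRatioAt y 4 * (1 - crossRatioAt y 1) = 1 - crossRatioAt y 0 := by
  obtain ⟨h₀, h₁, h₂, h₃, h₄⟩ := hy.crossRatioAt_mul_det3
  obtain ⟨g₀, g₁⟩ := hy.one_sub_crossRatioAt_mul_det3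
  have u (i j k : Fin 5) (h : i ≠ j ∧ i ≠ k ∧ j ≠ k) : IsUnit (det3 (y i) (y j) (y k)) :=
    hy i j k h.1 h.2.1 h.2.2
  set ρ₀ := crossRatioAt y 0
  set ρ₁ := crossRatioAt y 1
  set d₀₁₃ := det3 (y 0) (y 1) (y 3)
  set d₀₁₄ := det3 (y 0) (y 1) (y 4)
  set d₀₂₃ := det3 (y 0) (y 2) (y 3)
  set d₀₂₄ := det3 (y 0) (y 2) (y 4)
  set d₀₃₄ := det3 (y 0) (y 3) (y 4)
  set d₁₂₃ := det3 (y 1) (y 2) (y 3)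
  set d₁₂₄ := det3 (y 1) (y 2) (y 4)
  set d₁₃₄ := det3 (y 1) (y 3) (y 4)
  refine ⟨?_, ?_, ?_⟩
  · refine ((u 0 1 3 (by decide)).mul (u 0 2 4 (by decide)) |>.mul (u 0 2 3 (by decide))
      |>.mul (u 1 2 4 (by decide))).mul_left_inj.1 ?_
    linear_combination (ρ₀ * d₀₁₃ * d₀₂₄) * h₂ - (d₀₂₄ * d₀₂₃) * h₁ + (d₀₂₄ * d₁₂₃) * h₀
  · refine ((u 0 2 3 (by decide)).mul (u 1 3 4 (by decide)) |>.mul (u 0 1 3 (by decide))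
      |>.mul (u 0 2 4 (by decide)) |>.mul (u 0 1 3 (by decide)) |>.mul
      (u 1 2 4 (by decide))).mul_left_inj.1 ?_
    linear_combination (ρ₀ * d₀₁₃ * d₀₂₄ * (1 - ρ₁) * d₀₁₃ * d₁₂₄) * h₃
      + (d₀₃₄ * d₁₂₃ * (1 - ρ₁) * d₀₁₃ * d₁₂₄) * h₀ + (d₀₃₄ * d₁₂₃ * d₀₁₄ * d₀₂₃) * g₁
      - ((1 - ρ₀) * d₀₁₃ * d₀₂₄ * d₀₂₃ * d₁₃₄) * h₁ - (d₀₁₄ * d₁₂₃ * d₀₂₃ * d₁₃₄) * g₀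
  · refine ((u 0 2 4 (by decide)).mul (u 1 3 4 (by decide)) |>.mul (u 0 1 3 (by decide))
      |>.mul (u 1 2 4 (by decide))).mul_left_inj.1 ?_
    linear_combination ((1 - ρ₁) * d₀₁₃ * d₁₂₄) * h₄ + (d₀₃₄ * d₁₂₄) * g₁ - (d₁₃₄ * d₁₂₄) * g₀

end InGeneralPosition

end FivePoints

namespace DualNumber

variable {F : Type*} [Field F]

def dualBracket (z : DualNumber F) : ZDual F := bracket F z.fst z.snd

def fiveTermElem (A B : DualNumber F) : ZDual F :=
  dualBracket A - dualBracket B + dualBracket (B * A⁻¹) - dualBracket ((1 - B) * (1 - A)⁻¹)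
    + dualBracket (A * (1 - B) * (B * (1 - A))⁻¹)

def inversionElem (z : DualNumber F) : ZDual F := dualBracket z + dualBracket z⁻¹

theorem inversionElem_inl (a : F) : inversionElem (inl a : DualNumber F) = 0 := by
  simp [inversionElem, dualBracket, bracket, TrivSqZeroExt.inv_inl]

theorem eq_mul_inv_of_mul_eq' {a b x : DualNumber F} (hx : x.fst ≠ 0) (h : a * x = b) :
    a = b * x⁻¹ := by
  rw [← h, mul_assoc, TrivSqZeroExt.mul_inv_cancel hx, mul_one]

theorem fiveTermElem_mem {A B : DualNumber F} (hA₀ : A.fst ≠ 0) (hA₁ : A.fst ≠ 1)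
    (hB₀ : B.fst ≠ 0) (hB₁ : B.fst ≠ 1) (hAB : A.fst ≠ B.fst) :
    fiveTermElem A B ∈ fiveTermSubgroup F := by
  refine AddSubgroup.subset_closure ⟨A.fst, B.fst, A.snd, B.snd, hA₀, hA₁, hB₀, hB₁, hAB, ?_⟩
  simp only [fiveTermElem, dualBracket, fst_mul, snd_mul, fst_inv, snd_inv, fst_sub, snd_sub,
    fst_one, snd_one, smul_eq_mul, MulOpposite.smul_eq_mul_unop, MulOpposite.unop_op]
  refine congrArg₂ (· + ·) (congrArg₂ (· - ·) (congrArg₂ (· + ·) rfl ?_) ?_) ?_ <;>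
    congr 1 <;> field_simp <;> ring

theorem fiveTermElem_add_fiveTermElem_inv_inv {A B : DualNumber F} (hA₀ : A.fst ≠ 0)
    (hA₁ : A.fst ≠ 1) (hB₀ : B.fst ≠ 0) :
    fiveTermElem A B + fiveTermElem A⁻¹ B⁻¹
      = inversionElem A - inversionElem B + inversionElem (B * A⁻¹) := by
  have hA₁' : 1 - A.fst ≠ 0 := sub_ne_zero.2 hA₁.symm
  have e₁ : B⁻¹ * A⁻¹⁻¹ = (B * A⁻¹)⁻¹ := by rw [TrivSqZeroExt.mul_inv_rev, mul_comm]
  have e₂ : (1 - B⁻¹) * (1 - A⁻¹)⁻¹ = A * (1 - B) * (B * (1 - A))⁻¹ := by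
    ext <;> simp <;> field_simp <;> ring
  have e₃ : A⁻¹ * (1 - B⁻¹) * (B⁻¹ * (1 - A⁻¹))⁻¹ = (1 - B) * (1 - A)⁻¹ := by
    ext <;> simp <;> field_simp <;> ring
  simp only [fiveTermElem, inversionElem, e₁, e₂, e₃]
  abel

theorem fiveTermElem_inv_add_fiveTermElem_inv {g : DualNumber F} (h₀ : g.fst ≠ 0)
    (h₁ : g.fst ≠ 1) :
    fiveTermElem g g⁻¹ + fiveTermElem g⁻¹ g = inversionElem (g * g) := by
  have e₁ : g⁻¹ * g⁻¹ = (g * g)⁻¹ := (TrivSqZeroExt.mul_inv_rev g g).symm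
  have e₂ : g * g⁻¹⁻¹ = g * g := by rw [TrivSqZeroExt.inv_inv h₀]
  have e₃ : (1 - g⁻¹) * (1 - g)⁻¹ = -g⁻¹ := by ext <;> simp <;> field_simp <;> ring
  have e₄ : g * (1 - g⁻¹) * (g⁻¹ * (1 - g))⁻¹ = -g := by ext <;> simp <;> field_simp <;> ring
  have e₅ : (1 - g) * (1 - g⁻¹)⁻¹ = -g := by ext <;> simp <;> field_simp <;> ring
  have e₆ : g⁻¹ * (1 - g) * (g * (1 - g⁻¹))⁻¹ = -g⁻¹ := by ext <;> simp <;> field_simp <;> ring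
  simp only [fiveTermElem, inversionElem, e₁, e₂, e₃, e₄, e₅, e₆]
  abel

theorem inversionElem_sub_add_mem {A B : DualNumber F} (hA₀ : A.fst ≠ 0) (hA₁ : A.fst ≠ 1)
    (hB₀ : B.fst ≠ 0) (hB₁ : B.fst ≠ 1) (hAB : A.fst ≠ B.fst) :
    inversionElem A - inversionElem B + inversionElem (B * A⁻¹) ∈ fiveTermSubgroup F := by
  rw [← fiveTermElem_add_fiveTermElem_inv_inv hA₀ hA₁ hB₀]
  exact add_mem (fiveTermElem_mem hA₀ hA₁ hB₀ hB₁ hAB)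
    (fiveTermElem_mem (by simpa) (by simpa) (by simpa) (by simpa) (by simpa))

theorem inversionElem_mul_self_mem {g : DualNumber F} (h₀ : g.fst ≠ 0) (h₁ : g.fst ≠ 1)
    (h₂ : g.fst ≠ -1) : inversionElem (g * g) ∈ fiveTermSubgroup F := by
  have h : g.fst ≠ g.fst⁻¹ := fun h => by
    rcases mul_self_eq_one_iff.1 (mul_eq_one_iff_eq_inv₀ h₀ |>.2 h) with h' | h'
    exacts [h₁ h', h₂ h']
  rw [← fiveTermElem_inv_add_fiveTermElem_inv h₀ h₁]
  exact add_mem (fiveTermElem_mem h₀ h₁ (by simpa) (by simpa) h)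
    (fiveTermElem_mem (by simpa) (by simpa) h₀ h₁ h.symm)

theorem inversionElem_mem [CharZero F] {z : DualNumber F} (h₀ : z.fst ≠ 0) (h₁ : z.fst ≠ 1) :
    inversionElem z ∈ fiveTermSubgroup F := by
  obtain ⟨γ, hγ₀, hγ₁, hγ₂, hγz⟩ : ∃ γ : F, γ ≠ 0 ∧ γ ≠ 1 ∧ γ ≠ -1 ∧ γ * γ ≠ z.fst := by
    by_cases h₄ : z.fst = 4
    · exact ⟨3, by norm_num, by norm_num, by norm_num, by rw [h₄]; norm_num⟩
    · exact ⟨2, by norm_num, by norm_num, by norm_num, by norm_num; exact Ne.symm h₄⟩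
  -- `z = g² / A` with `A` a constant; `γ² ≠ z.fst` keeps `A.fst ≠ 1`.
  set g : DualNumber F := inl γ + inr (γ * z.snd / (2 * z.fst))
  set A : DualNumber F := inl (γ * γ / z.fst)
  have hz : g * g * A⁻¹ = z := by
    ext
    · simp [g, A]
      field_simp
    · simp [g, A]
      field_simp
      ring
  have hg : g.fst = γ := by simp [g]
  have hAf : A.fst = γ * γ / z.fst := rfl
  have hγγ₀ : γ * γ ≠ 0 := mul_self_ne_zero.2 hγ₀
  have hγγ₁ : γ * γ ≠ 1 := fun h => (mul_self_eq_one_iff.1 h).elim hγ₁ hγ₂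
  have h := inversionElem_sub_add_mem (A := A) (B := g * g)
    (by rw [hAf]; exact div_ne_zero hγγ₀ h₀) (by rw [hAf]; exact div_ne_one_of_ne hγz)
    (by rw [fst_mul, hg]; exact hγγ₀) (by rw [fst_mul, hg]; exact hγγ₁)
    (by
      rw [hAf, fst_mul, hg, Ne, div_eq_iff h₀]
      exact fun h => h₁ (mul_left_cancel₀ hγγ₀ (by rw [mul_one, ← h])))
  rw [hz, inversionElem_inl, zero_sub] at h
  have := add_mem h (inversionElem_mul_self_mem (hg ▸ hγ₀) (hg ▸ hγ₁) (hg ▸ hγ₂))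
  rwa [neg_add_cancel_comm] at this

theorem fiveTermElem_add_inversionElem_sub_mem [CharZero F] {A B : DualNumber F}
    (hA₀ : A.fst ≠ 0) (hA₁ : A.fst ≠ 1) (hB₀ : B.fst ≠ 0) (hB₁ : B.fst ≠ 1)
    (hAB : A.fst ≠ B.fst) :
    fiveTermElem A B + inversionElem ((1 - B) * (1 - A)⁻¹)
      - inversionElem (A * (1 - B) * (B * (1 - A))⁻¹) ∈ fiveTermSubgroup F := by
  have hA₁' : 1 - A.fst ≠ 0 := sub_ne_zero.2 hA₁.symm
  have hB₁' : 1 - B.fst ≠ 0 := sub_ne_zero.2 hB₁.symm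
  refine sub_mem (add_mem (fiveTermElem_mem hA₀ hA₁ hB₀ hB₁ hAB) (inversionElem_mem ?_ ?_))
    (inversionElem_mem ?_ ?_) <;>
    simp only [fst_mul, fst_inv, fst_sub, fst_one, Ne, mul_inv_eq_one₀ hA₁',
      mul_inv_eq_one₀ (mul_ne_zero hB₀ hA₁')]
  · exact mul_ne_zero hB₁' (inv_ne_zero hA₁')
  · exact fun h => hAB (by linear_combination h)
  · exact mul_ne_zero (mul_ne_zero hA₀ hB₁') (inv_ne_zero (mul_ne_zero hB₀ hA₁'))
  · exact fun h => hAB (by linear_combination h)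

theorem dualBracket_alternating_sum_mem [CharZero F] {A B C D E : DualNumber F}
    (hA₀ : A.fst ≠ 0) (hA₁ : A.fst ≠ 1) (hB₀ : B.fst ≠ 0) (hB₁ : B.fst ≠ 1)
    (hAB : A.fst ≠ B.fst) (hC : C * A = B) (hD : D * (A * (1 - B)) = B * (1 - A))
    (hE : E * (1 - B) = 1 - A) :
    dualBracket A - dualBracket B + dualBracket C - dualBracket D + dualBracket E
      ∈ fiveTermSubgroup F := by
  have hA₁' : (1 - A).fst ≠ 0 := by simpa [sub_eq_zero] using hA₁.symm
  have hB₁' : (1 - B).fst ≠ 0 := by simpa [sub_eq_zero] using hB₁.symm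
  have hC' : C = B * A⁻¹ := eq_mul_inv_of_mul_eq' hA₀ hC
  have hD' : D = (A * (1 - B) * (B * (1 - A))⁻¹)⁻¹ := by
    rw [eq_mul_inv_of_mul_eq' (by rw [fst_mul]; exact mul_ne_zero hA₀ hB₁') hD]
    simp only [TrivSqZeroExt.mul_inv_rev, TrivSqZeroExt.inv_inv hB₀, TrivSqZeroExt.inv_inv hA₁']
  have hE' : E = ((1 - B) * (1 - A)⁻¹)⁻¹ := by
    rw [eq_mul_inv_of_mul_eq' hB₁' hE, TrivSqZeroExt.mul_inv_rev, TrivSqZeroExt.inv_inv hA₁',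
      mul_comm]
  have h := fiveTermElem_add_inversionElem_sub_mem hA₀ hA₁ hB₀ hB₁ hAB
  rw [fiveTermElem, inversionElem, inversionElem, ← hC', ← hD', ← hE'] at h
  convert h using 1
  abel

theorem inGeneralPosition_of_fst {ι : Type*} {Y : ι → Fin 3 → DualNumber F}
    (hY : InGeneralPosition fun i => (fstHom F F F : F[ε] →+* F) ∘ Y i) :
    InGeneralPosition Y := fun i j k hij hik hjk => by
  have h := hY i j k hij hik hjk
  rw [← map_det3] at h
  exact isUnit_iff_isUnit_fst.2 h

theorem sum_zsmul_dualBracket_crossRatioAt_mem [CharZero F] {Y : Fin 5 → Fin 3 → DualNumber F}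
    (hY : InGeneralPosition Y) :
    ∑ i : Fin 5, ((-1 : ℤ) ^ (i : ℕ)) • dualBracket (crossRatioAt Y i) ∈ fiveTermSubgroup F := by
  obtain ⟨h₂, h₃, h₄⟩ := hY.crossRatioAt_relations
  have fst_ne_zero {z : DualNumber F} (hz : IsUnit z) : z.fst ≠ 0 :=
    (isUnit_iff_isUnit_fst.1 hz).ne_zero
  have hρ₀ i : (crossRatioAt Y i).fst ≠ 0 := fst_ne_zero (hY.isUnit_crossRatioAt i)
  have hρ₁ i : (crossRatioAt Y i).fst ≠ 1 := by
    have h := fst_ne_zero (hY.isUnit_one_sub_crossRatioAt i)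
    rw [fst_sub, fst_one, sub_ne_zero] at h
    exact h.symm
  have hAB : (crossRatioAt Y 0).fst ≠ (crossRatioAt Y 1).fst := by
    rw [← h₂, fst_mul]
    exact fun h => hρ₁ 2 (mul_right_cancel₀ (hρ₀ 0) (by rw [one_mul, ← h]))
  have := dualBracket_alternating_sum_mem (hρ₀ 0) (hρ₁ 0) (hρ₀ 1) (hρ₁ 1) hAB h₂ h₃ h₄
  rw [Fin.sum_univ_five]
  simpa [sub_eq_add_neg] using this

end DualNumber

/-- **Projected five-term relation in `TB₂(F)`** (Lemma 5pt): for five points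
`x*_i = x_i + x'_i ε` in generic position,
`Σ_{i=0}^{4} (−1)^i ⟨ r(x_i|x₀,…,x̂_i,…,x₄) ; r_ε(x*_i|x*₀,…,x̂*_i,…,x*₄) ]` lies in the
five-term subgroup `R`. -/
theorem projected_five_term (F : Type*) [Field F] [CharZero F]
    (x x' : Fin 5 → Fin 3 → F)
    (h : ∀ i j k : Fin 5, i ≠ j → i ≠ k → j ≠ k → det3 (x i) (x j) (x k) ≠ 0) :
    (∑ i : Fin 5, ((-1 : ℤ) ^ (i : ℕ)) •
      bracket F
        (projCr (x i) (x (i.succAbove 0)) (x (i.succAbove 1)) (x (i.succAbove 2))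
          (x (i.succAbove 3)))
        (tCoeff
          (projCrDual (dualPt (x i) (x' i))
            (dualPt (x (i.succAbove 0)) (x' (i.succAbove 0)))
            (dualPt (x (i.succAbove 1)) (x' (i.succAbove 1)))
            (dualPt (x (i.succAbove 2)) (x' (i.succAbove 2)))
            (dualPt (x (i.succAbove 3)) (x' (i.succAbove 3)))) 1))
      ∈ fiveTermSubgroup F := by
  let e := TruncPoly.dualNumberEquiv (F := F)
  let π : F[ε] →+* F := fstHom F F F
  let Z i := dualPt (x i) (x' i)
  let Y i := e ∘ Z i
  have hπY : (fun i => π ∘ Y i) = x := by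
    funext i k
    simp [π, Y, Z, e, TruncPoly.dualNumberEquiv_dualPt]
  have hY : InGeneralPosition Y :=
    inGeneralPosition_of_fst (hπY ▸ fun i j k hij hik hjk => (h i j k hij hik hjk).isUnit)
  have hZ : InGeneralPosition Z := by
    simpa [Y, Function.comp_def] using hY.map (e.symm : F[ε] →+* TruncPoly F 2)
  convert sum_zsmul_dualBracket_crossRatioAt_mem hY using 3 with i
  rw [dualBracket, projCr_eq_crossRatio, projCrDual_eq_crossRatio]
  congr 1
  · have hρ := hY.map_crossRatioAt π i
    rw [hπY] at hρ
    exact hρ.symm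
  · -- the left side is `tCoeff (crossRatioAt Z i) 1`, and `e` is `toDualNumber`
    exact (TruncPoly.snd_toDualNumber _).symm.trans
      (congrArg snd (hZ.map_crossRatioAt (e : TruncPoly F 2 →+* F[ε]) i))
end
end

section
/- Let F be a field of characteristic 0 and let l*_i = l_i + l_{i,ε}ε ∈ (F[ε]₂)², i = 0,…,3, with Δ(l_i,l_j) ≠ 0 for all i ≠ j. Let r := Δ(l₀,l₃)Δ(l₁,l₂)/(Δ(l₀,l₂)Δ(l₁,l₃)) be the cross-ratio and r_ε the ε-coefficient of the dual-number cross-ratio Δ(l*₀,l*₃)Δ(l*₁,l*₂)·(Δ(l*₀,l*₂)Δ(l*₁,l*₃))⁻¹. Then r ≠ 0, r ≠ 1, and Σ_{i=0}^{3} (−1)^i τ²₀,ε(l*₀,…,l̂*_i,…,l*₃) = ( (r_ε/r) ⊗ (1−r) + (r_ε/(1−r)) ⊗ r , (r_ε/(1−r)) ∧ (r_ε/r) ) in (F ⊗_ℤ F^×) ⊕ ⋀²_ℤ F; i.e. the square relating the Grassmannian complex to the tangent complex in weight 2 commutes. -/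
noncomputable section
open Polynomial TensorProduct

/-- For vectors `u, v ∈ R²` over a commutative ring, `Δ(u,v) := u₁v₂ − u₂v₁`. -/
def det2 {R : Type*} [CommRing R] (u v : Fin 2 → R) : R := u 0 * v 1 - u 1 * v 0

/-- The dual vector `l + l_ε·ε ∈ (F[ε]₂)²`. -/
def dualVec {F : Type*} [CommRing F] (l lε : Fin 2 → F) : Fin 2 → TruncPoly F 2 :=
  fun k => tIncl F 2 (l k) + tIncl F 2 (lε k) * tEps F 2

open Classical in
/-- `x` as a unit of `F` (junk value `1` if `x = 0`). -/
def toUnit {F : Type*} [Field F] (x : F) : Fˣ := if h : x = 0 then 1 else Units.mk0 x h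

/-- The wedge `a ∧ b` of two elements of the additive group `M`, computed in the
exterior algebra `⋀_ℤ M` (in which `⋀²_ℤ M` embeds). -/
def wedge2 {M : Type*} [AddCommGroup M] (a b : M) : ExteriorAlgebra ℤ M :=
  ExteriorAlgebra.ι ℤ a * ExteriorAlgebra.ι ℤ b

/-- The map `τ²₀,ε` on a configuration of three points, given the table `D` of pairwise
determinants and the table `De` of their ε-parts: with `A_{ij} := De i j / D i j`,
`τ²₀,ε = ( A₁₂ ⊗ (D₀₂/D₀₁) − A₀₂ ⊗ (D₁₂/D₁₀) + A₀₁ ⊗ (D₂₁/D₂₀) ,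
           A₀₁ ∧ A₁₂ − A₀₁ ∧ A₀₂ + A₁₂ ∧ A₀₂ )`. -/
def tau20 {F : Type*} [Field F] (D De : Fin 3 → Fin 3 → F) :
    (F ⊗[ℤ] Additive Fˣ) × ExteriorAlgebra ℤ F :=
  ((De 1 2 / D 1 2) ⊗ₜ Additive.ofMul (toUnit (D 0 2 / D 0 1))
    - (De 0 2 / D 0 2) ⊗ₜ Additive.ofMul (toUnit (D 1 2 / D 1 0))
    + (De 0 1 / D 0 1) ⊗ₜ Additive.ofMul (toUnit (D 2 1 / D 2 0)),
   wedge2 (De 0 1 / D 0 1) (De 1 2 / D 1 2) - wedge2 (De 0 1 / D 0 1) (De 0 2 / D 0 2)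
    + wedge2 (De 1 2 / D 1 2) (De 0 2 / D 0 2))

section Helpers
variable {F : Type*} [CommRing F]

lemma w2_eps_sq : (tEps F 2) ^ 2 = 0 := by
  have : ((AdjoinRoot.mk ((X:F[X])^2)) (X^2)) = 0 := AdjoinRoot.mk_self
  simpa [tEps, map_pow] using this

lemma w2_mul_expand (a b c d : F) :
    (tIncl F 2 a + tIncl F 2 b * tEps F 2) * (tIncl F 2 c + tIncl F 2 d * tEps F 2)
      = tIncl F 2 (a*c) + tIncl F 2 (a*d + b*c) * tEps F 2 := by
  simp only [map_add, map_mul]; ring_nf; rw [w2_eps_sq]; ring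

lemma w2_mk_form (a b : F) : tIncl F 2 a + tIncl F 2 b * tEps F 2
    = AdjoinRoot.mk ((X:F[X])^2) (C a + C b * X) := by
  rw [map_add, map_mul, AdjoinRoot.mk_C, AdjoinRoot.mk_C, AdjoinRoot.mk_X]; rfl

lemma w2_tCoeff_one [Nontrivial F] (a b : F) :
    tCoeff (tIncl F 2 a + tIncl F 2 b * tEps F 2) 1 = b := by
  rw [tCoeff, w2_mk_form, AdjoinRoot.modByMonicHom_mk]
  rw [Polynomial.modByMonic_eq_self_iff (monic_X_pow 2) |>.mpr]
  · simp
  · refine lt_of_le_of_lt (degree_add_le _ _) ?_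
    rw [degree_X_pow]
    refine max_lt (lt_of_le_of_lt degree_C_le (by norm_num)) ?_
    exact lt_of_le_of_lt (degree_mul_le _ _)
      (lt_of_le_of_lt (add_le_add degree_C_le degree_X_le) (by norm_num))

lemma w2_det2_dualVec (u uε v vε : Fin 2 → F) :
    det2 (dualVec u uε) (dualVec v vε)
      = tIncl F 2 (det2 u v) + tIncl F 2 (det2 uε v + det2 u vε) * tEps F 2 := by
  simp only [det2, dualVec, w2_mul_expand]
  simp only [map_sub, map_add]
  ring

lemma w2_inverse_trunc {F : Type*} [Field F] {c d : F} (hc : c ≠ 0) :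
    Ring.inverse (tIncl F 2 c + tIncl F 2 d * tEps F 2)
      = tIncl F 2 c⁻¹ + tIncl F 2 (-(d / (c*c))) * tEps F 2 := by
  have key : (tIncl F 2 c + tIncl F 2 d * tEps F 2)
      * (tIncl F 2 c⁻¹ + tIncl F 2 (-(d / (c*c))) * tEps F 2) = 1 := by
    rw [w2_mul_expand]
    have h1 : c * c⁻¹ = 1 := mul_inv_cancel₀ hc
    have h2 : c * -(d / (c*c)) + d * c⁻¹ = 0 := by field_simp; ring
    rw [h1, h2]
    simp
  set u : (TruncPoly F 2)ˣ := ⟨_, _, key, by rw [mul_comm] at key; exact key⟩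
  have : (tIncl F 2 c + tIncl F 2 d * tEps F 2) = (u : TruncPoly F 2) := rfl
  rw [this, Ring.inverse_unit]
  rfl

end Helpers

section Helpers2
variable {F : Type*} [Field F]

lemma w2_toUnit_mul {x y : F} (hx : x ≠ 0) (hy : y ≠ 0) :
    toUnit (x * y) = toUnit x * toUnit y := by
  ext
  simp [toUnit, hx, hy, mul_ne_zero hx hy]

lemma w2_toUnit_inv (x : F) : toUnit x⁻¹ = (toUnit x)⁻¹ := by
  rcases eq_or_ne x 0 with rfl | hx
  · simp [toUnit]
  · ext; simp [toUnit, hx, inv_ne_zero hx]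

lemma w2_toUnit_div {x y : F} (hx : x ≠ 0) (hy : y ≠ 0) :
    toUnit (x / y) = toUnit x * (toUnit y)⁻¹ := by
  rw [div_eq_mul_inv, w2_toUnit_mul hx (inv_ne_zero hy), w2_toUnit_inv]

lemma w2_tmul_torsion [CharZero F] (a : F) :
    a ⊗ₜ[ℤ] Additive.ofMul (toUnit (-1 : F)) = 0 := by
  have hne : (-1 : F) ≠ 0 := by norm_num
  have h2 : (2:ℤ) • Additive.ofMul (toUnit (-1 : F)) = 0 := by
    have : toUnit (-1:F) * toUnit (-1:F) = 1 := by
      ext; simp [toUnit, hne]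
    rw [two_zsmul, ← ofMul_mul, this]
    rfl
  have ha : a = (2:ℤ) • (a / 2) := by
    rw [zsmul_eq_mul]; push_cast; field_simp
  rw [ha, smul_tmul, h2, tmul_zero]

lemma w2_tmul_toUnit_neg [CharZero F] (a x : F) :
    a ⊗ₜ[ℤ] Additive.ofMul (toUnit (-x)) = a ⊗ₜ[ℤ] Additive.ofMul (toUnit x) := by
  rcases eq_or_ne x 0 with rfl | hx
  · norm_num
  · have : (-x) = (-1) * x := by ring
    rw [this, w2_toUnit_mul (by norm_num) hx, ofMul_mul, tmul_add, w2_tmul_torsion, zero_add]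

lemma w2_tmul_ratio [CharZero F] (a : F) {x y : F} (hx : x ≠ 0) (hy : y ≠ 0) :
    a ⊗ₜ[ℤ] Additive.ofMul (toUnit (x / y))
      = a ⊗ₜ[ℤ] Additive.ofMul (toUnit x) - a ⊗ₜ[ℤ] Additive.ofMul (toUnit y) := by
  rw [w2_toUnit_div hx hy, ofMul_mul, tmul_add, ofMul_inv, tmul_neg, ← sub_eq_add_neg]

lemma w2_tmul_ratio4 [CharZero F] (a : F) {x y z w : F}
    (hx : x ≠ 0) (hy : y ≠ 0) (hz : z ≠ 0) (hw : w ≠ 0) :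
    a ⊗ₜ[ℤ] Additive.ofMul (toUnit (x * y / (z * w)))
      = a ⊗ₜ[ℤ] Additive.ofMul (toUnit x) + a ⊗ₜ[ℤ] Additive.ofMul (toUnit y)
        - a ⊗ₜ[ℤ] Additive.ofMul (toUnit z) - a ⊗ₜ[ℤ] Additive.ofMul (toUnit w) := by
  rw [w2_tmul_ratio a (mul_ne_zero hx hy) (mul_ne_zero hz hw),
    w2_toUnit_mul hx hy, w2_toUnit_mul hz hw, ofMul_mul, ofMul_mul, tmul_add, tmul_add]
  abel

end Helpers2

section Helpers3
variable {M : Type*} [AddCommGroup M]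

lemma w2_wedge2_self (a : M) : wedge2 a a = 0 := by
  simp [wedge2, ExteriorAlgebra.ι_sq_zero]
lemma w2_wedge2_swap (a b : M) : wedge2 b a = - wedge2 a b := by
  rw [wedge2, wedge2, eq_neg_iff_add_eq_zero, add_comm]
  exact ExteriorAlgebra.ι_add_mul_swap a b
lemma w2_wedge2_add_left (a b c : M) : wedge2 (a + b) c = wedge2 a c + wedge2 b c := by
  simp [wedge2, map_add, add_mul]
lemma w2_wedge2_sub_left (a b c : M) : wedge2 (a - b) c = wedge2 a c - wedge2 b c := by
  simp [wedge2, map_sub, sub_mul]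
lemma w2_wedge2_add_right (a b c : M) : wedge2 a (b + c) = wedge2 a b + wedge2 a c := by
  simp [wedge2, map_add, mul_add]
lemma w2_wedge2_sub_right (a b c : M) : wedge2 a (b - c) = wedge2 a b - wedge2 a c := by
  simp [wedge2, map_sub, mul_sub]

lemma w2_wedge_id (a01 a02 a03 a12 a13 a23 : M) :
    (wedge2 a12 a23 - wedge2 a12 a13 + wedge2 a23 a13)
    - (wedge2 a02 a23 - wedge2 a02 a03 + wedge2 a23 a03)
    + (wedge2 a01 a13 - wedge2 a01 a03 + wedge2 a13 a03)
    - (wedge2 a01 a12 - wedge2 a01 a02 + wedge2 a12 a02)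
    = wedge2 (a02 + a13 - a01 - a23) (a03 + a12 - a02 - a13) := by
  simp only [w2_wedge2_add_left, w2_wedge2_sub_left, w2_wedge2_add_right,
    w2_wedge2_sub_right, w2_wedge2_self]
  rw [w2_wedge2_swap a12 a02, w2_wedge2_swap a02 a13, w2_wedge2_swap a12 a13,
    w2_wedge2_swap a12 a23, w2_wedge2_swap a02 a23]
  abel

end Helpers3

/-- **Commutativity of the weight-2 square** (Lemma `claim2`): for four dual vectors with
nonzero base determinants, `τ²₀,ε ∘ d = ∂_ε ∘ τ²₁,ε`; the cross-ratio `r` satisfies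
`r ≠ 0`, `r ≠ 1`, and
`Σ_i (−1)^i τ²₀,ε(l*₀,…,l̂*_i,…,l*₃)
  = ( (r_ε/r) ⊗ (1−r) + (r_ε/(1−r)) ⊗ r , (r_ε/(1−r)) ∧ (r_ε/r) )`. -/
theorem weight2_square_commutes (F : Type*) [Field F] [CharZero F]
    (l lε : Fin 4 → Fin 2 → F)
    (h : ∀ i j : Fin 4, i ≠ j → det2 (l i) (l j) ≠ 0) :
    letI L : Fin 4 → Fin 2 → TruncPoly F 2 := fun i => dualVec (l i) (lε i)
    letI r : F := det2 (l 0) (l 3) * det2 (l 1) (l 2) / (det2 (l 0) (l 2) * det2 (l 1) (l 3))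
    letI rε : F := tCoeff ((det2 (L 0) (L 3) * det2 (L 1) (L 2))
      * Ring.inverse (det2 (L 0) (L 2) * det2 (L 1) (L 3))) 1
    r ≠ 0 ∧ r ≠ 1 ∧
      (∑ i : Fin 4, ((-1 : ℤ) ^ (i : ℕ)) •
          tau20 (fun a b => det2 (l (i.succAbove a)) (l (i.succAbove b)))
            (fun a b => det2 (lε (i.succAbove a)) (l (i.succAbove b))
              + det2 (l (i.succAbove a)) (lε (i.succAbove b))))
        = ((rε / r) ⊗ₜ Additive.ofMul (toUnit (1 - r))
            + (rε / (1 - r)) ⊗ₜ Additive.ofMul (toUnit r),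
           wedge2 (rε / (1 - r)) (rε / r)) := by
  have h01 := h 0 1 (by decide)
  have h02 := h 0 2 (by decide)
  have h03 := h 0 3 (by decide)
  have h12 := h 1 2 (by decide)
  have h13 := h 1 3 (by decide)
  have h23 := h 2 3 (by decide)
  have s10 : det2 (l 1) (l 0) = -det2 (l 0) (l 1) := by unfold det2; ring
  have s20 : det2 (l 2) (l 0) = -det2 (l 0) (l 2) := by unfold det2; ring
  have s30 : det2 (l 3) (l 0) = -det2 (l 0) (l 3) := by unfold det2; ring
  have s21 : det2 (l 2) (l 1) = -det2 (l 1) (l 2) := by unfold det2; ring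
  have s31 : det2 (l 3) (l 1) = -det2 (l 1) (l 3) := by unfold det2; ring
  have s32 : det2 (l 3) (l 2) = -det2 (l 2) (l 3) := by unfold det2; ring
  have h1r : (1:F) - det2 (l 0) (l 3) * det2 (l 1) (l 2) / (det2 (l 0) (l 2) * det2 (l 1) (l 3)) = det2 (l 0) (l 1) * det2 (l 2) (l 3) / (det2 (l 0) (l 2) * det2 (l 1) (l 3)) := by
    field_simp
    unfold det2; ring
  have h1rne : (1:F) - det2 (l 0) (l 3) * det2 (l 1) (l 2) / (det2 (l 0) (l 2) * det2 (l 1) (l 3)) ≠ 0 := by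
    rw [h1r]
    exact div_ne_zero (mul_ne_zero h01 h23) (mul_ne_zero h02 h13)
  have hdne : det2 (l 0) (l 2) * det2 (l 1) (l 3) ≠ 0 := mul_ne_zero h02 h13
  have hE : tCoeff (det2 (dualVec (l 0) (lε 0)) (dualVec (l 3) (lε 3)) * det2 (dualVec (l 1) (lε 1)) (dualVec (l 2) (lε 2)) * Ring.inverse (det2 (dualVec (l 0) (lε 0)) (dualVec (l 2) (lε 2)) * det2 (dualVec (l 1) (lε 1)) (dualVec (l 3) (lε 3)))) 1 = (((det2 (l 0) (l 3) * (det2 (lε 1) (l 2) + det2 (l 1) (lε 2)) + (det2 (lε 0) (l 3) + det2 (l 0) (lε 3)) * det2 (l 1) (l 2)))*(det2 (l 0) (l 2) * det2 (l 1) (l 3)) - (det2 (l 0) (l 3) * det2 (l 1) (l 2))*((det2 (l 0) (l 2) * (det2 (lε 1) (l 3) + det2 (l 1) (lε 3)) + (det2 (lε 0) (l 2) + det2 (l 0) (lε 2)) * det2 (l 1) (l 3))))/((det2 (l 0) (l 2) * det2 (l 1) (l 3))*(det2 (l 0) (l 2) * det2 (l 1) (l 3))) := by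
    simp only [w2_det2_dualVec, w2_mul_expand, w2_inverse_trunc hdne, w2_tCoeff_one]
    field_simp
    ring
  have hP : tCoeff (det2 (dualVec (l 0) (lε 0)) (dualVec (l 3) (lε 3)) * det2 (dualVec (l 1) (lε 1)) (dualVec (l 2) (lε 2)) * Ring.inverse (det2 (dualVec (l 0) (lε 0)) (dualVec (l 2) (lε 2)) * det2 (dualVec (l 1) (lε 1)) (dualVec (l 3) (lε 3)))) 1 / (det2 (l 0) (l 3) * det2 (l 1) (l 2) / (det2 (l 0) (l 2) * det2 (l 1) (l 3))) = ((det2 (lε 0) (l 3) + det2 (l 0) (lε 3)) / det2 (l 0) (l 3) + (det2 (lε 1) (l 2) + det2 (l 1) (lε 2)) / det2 (l 1) (l 2) - (det2 (lε 0) (l 2) + det2 (l 0) (lε 2)) / det2 (l 0) (l 2) - (det2 (lε 1) (l 3) + det2 (l 1) (lε 3)) / det2 (l 1) (l 3)) := by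
    rw [hE]
    field_simp
    ring
  have hQ : tCoeff (det2 (dualVec (l 0) (lε 0)) (dualVec (l 3) (lε 3)) * det2 (dualVec (l 1) (lε 1)) (dualVec (l 2) (lε 2)) * Ring.inverse (det2 (dualVec (l 0) (lε 0)) (dualVec (l 2) (lε 2)) * det2 (dualVec (l 1) (lε 1)) (dualVec (l 3) (lε 3)))) 1 / (1 - (det2 (l 0) (l 3) * det2 (l 1) (l 2) / (det2 (l 0) (l 2) * det2 (l 1) (l 3)))) = ((det2 (lε 0) (l 2) + det2 (l 0) (lε 2)) / det2 (l 0) (l 2) + (det2 (lε 1) (l 3) + det2 (l 1) (lε 3)) / det2 (l 1) (l 3) - (det2 (lε 0) (l 1) + det2 (l 0) (lε 1)) / det2 (l 0) (l 1) - (det2 (lε 2) (l 3) + det2 (l 2) (lε 3)) / det2 (l 2) (l 3)) := by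
    rw [hE, h1r]
    field_simp
    unfold det2; ring
  refine ⟨div_ne_zero (mul_ne_zero h03 h12) hdne, ?_, ?_⟩
  · intro heq
    apply h1rne
    rw [heq]; ring
  · rw [Fin.sum_univ_four]
    simp only [tau20, show (Fin.succAbove 0 0 : Fin 4) = 1 from by decide, show (Fin.succAbove 0 1 : Fin 4) = 2 from by decide, show (Fin.succAbove 0 2 : Fin 4) = 3 from by decide, show (Fin.succAbove 1 0 : Fin 4) = 0 from by decide, show (Fin.succAbove 1 1 : Fin 4) = 2 from by decide, show (Fin.succAbove 1 2 : Fin 4) = 3 from by decide, show (Fin.succAbove 2 0 : Fin 4) = 0 from by decide, show (Fin.succAbove 2 1 : Fin 4) = 1 from by decide, show (Fin.succAbove 2 2 : Fin 4) = 3 from by decide, show (Fin.succAbove 3 0 : Fin 4) = 0 from by decide, show (Fin.succAbove 3 1 : Fin 4) = 1 from by decide, show (Fin.succAbove 3 2 : Fin 4) = 2 from by decide, show ((-1:ℤ)) ^ ((0:Fin 4):ℕ) = 1 from by decide, show ((-1:ℤ)) ^ ((1:Fin 4):ℕ) = -1 from by decide, show ((-1:ℤ)) ^ ((2:Fin 4):ℕ)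 = 1 from by decide, show ((-1:ℤ)) ^ ((3:Fin 4):ℕ) = -1 from by decide, one_smul, neg_smul, Prod.neg_mk, Prod.mk_add_mk, Prod.mk.injEq]
    constructor
    · rw [hP, hQ, h1r]
      rw [s10, s20, s30, s21, s31, s32]
      simp only [neg_div_neg_eq, div_neg, neg_div, neg_neg, w2_tmul_toUnit_neg]
      rw [w2_tmul_ratio _ h13 h12,
      w2_tmul_ratio _ h23 h12,
      w2_tmul_ratio _ h23 h13,
      w2_tmul_ratio _ h03 h02,
      w2_tmul_ratio _ h23 h02,
      w2_tmul_ratio _ h23 h03,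
      w2_tmul_ratio _ h03 h01,
      w2_tmul_ratio _ h13 h01,
      w2_tmul_ratio _ h13 h03,
      w2_tmul_ratio _ h02 h01,
      w2_tmul_ratio _ h12 h01,
      w2_tmul_ratio _ h12 h02,
        w2_tmul_ratio4 _ h01 h23 h02 h13, w2_tmul_ratio4 _ h03 h12 h02 h13]
      simp only [tmul_sub, tmul_add, sub_tmul, add_tmul]
      abel
    · rw [hP, hQ]
      rw [← w2_wedge_id ((det2 (lε 0) (l 1) + det2 (l 0) (lε 1)) / det2 (l 0) (l 1)) ((det2 (lε 0) (l 2) + det2 (l 0) (lε 2)) / det2 (l 0) (l 2)) ((det2 (lε 0) (l 3) + det2 (l 0) (lε 3)) / det2 (l 0) (l 3)) ((det2 (lε 1) (l 2) + det2 (l 1) (lε 2)) / det2 (l 1) (l 2)) ((det2 (lε 1) (l 3) + det2 (l 1) (lε 3)) / det2 (l 1) (l 3)) ((det2 (lε 2) (l 3) + det2 (l 2) (lε 3)) / det2 (l 2) (l 3))]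
      abel

end
end

section
/- Let F be a field of characteristic 0, a ∈ F∖{0,1}, and b ∈ F. Then the element ⟨a;b] + ⟨1−a;−b] of ℤ[F[ε]₂] lies in the five-term subgroup R; i.e. the two-term relation ⟨a;b]₂ = −⟨1−a;−b]₂ holds in the tangent group TB₂(F). -/
noncomputable section
open Polynomial

/-! The five-term relations at `(a, b; p, 0)` and at `(1 - a, 1 - b; -p, 0)` have their middle
terms in common with opposite signs, so their sum is `⟨a;p] + ⟨1-a;-p]` plus a tangent inversion
element `⟨x;x'] + ⟨1/x;-x'/x²]` at `x = a(1-b)/(b(1-a))`. It remains to show that inversion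
elements lie in `R`. The five-term relations at `(a, b)` and `(b, a)` show that their classes are
invariant under the scaling `(y, y') ↦ (cy, cy')`, which reduces everything to `y = 4`; that case
is a combination of six five-term relations at the points `3/2, 3, -1/2, -2`. -/

lemma bracket_zero_right (F : Type*) [CommRing F] (u : F) : bracket F u 0 = 0 := by
  rw [bracket, map_zero, zero_mul, add_zero, sub_self]

/-- The tangent of `[y] + [1/y]`: `-y'/y²` is the `ε`-coefficient of `(y + y'ε)⁻¹`. -/
def inversionElement (F : Type*) [Field F] (y y' : F) : ZDual F :=
  bracket F y y' + bracket F y⁻¹ (-(y' / y ^ 2))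

def fiveTermElement (F : Type*) [Field F] (a b a' b' : F) : ZDual F :=
  bracket F a a' - bracket F b b'
    + bracket F (b / a) ((a * b' - a' * b) / a ^ 2)
    - bracket F ((1 - b) / (1 - a)) (((1 - b) * a' - (1 - a) * b') / (1 - a) ^ 2)
    + bracket F (a * (1 - b) / (b * (1 - a)))
        ((b * (1 - b) * a' - a * (1 - a) * b') / (b * (1 - a)) ^ 2)

section
variable {F : Type*} [Field F]

lemma fiveTermElement_mem {a b : F} (a' b' : F)
    (ha0 : a ≠ 0) (ha1 : a ≠ 1) (hb0 : b ≠ 0) (hb1 : b ≠ 1) (hab : a ≠ b) :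
    fiveTermElement F a b a' b' ∈ fiveTermSubgroup F :=
  AddSubgroup.subset_closure ⟨a, b, a', b', ha0, ha1, hb0, hb1, hab, rfl⟩

lemma fiveTerm_mem {a b a' b' u s v t w r : F}
    (ha0 : a ≠ 0) (ha1 : a ≠ 1) (hb0 : b ≠ 0) (hb1 : b ≠ 1) (hab : a ≠ b)
    (hu : u = b / a) (hs : s = (a * b' - a' * b) / a ^ 2)
    (hv : v = (1 - b) / (1 - a)) (ht : t = ((1 - b) * a' - (1 - a) * b') / (1 - a) ^ 2)
    (hw : w = a * (1 - b) / (b * (1 - a)))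
    (hr : r = (b * (1 - b) * a' - a * (1 - a) * b') / (b * (1 - a)) ^ 2) :
    bracket F a a' - bracket F b b' + bracket F u s - bracket F v t + bracket F w r
      ∈ fiveTermSubgroup F := by
  subst hu hs hv ht hw hr
  exact fiveTermElement_mem a' b' ha0 ha1 hb0 hb1 hab

lemma inversionElement_sub_mem {a b : F} (a' : F)
    (ha0 : a ≠ 0) (ha1 : a ≠ 1) (hb0 : b ≠ 0) (hb1 : b ≠ 1) (hab : a ≠ b) :
    inversionElement F (a * (1 - b) / (b * (1 - a))) (a' * (a - b) / (b * (1 - a) ^ 2))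
      - inversionElement F ((1 - b) / (1 - a)) (a' * (a - b) / (a * (1 - a) ^ 2))
      ∈ fiveTermSubgroup F := by
  have hrel_ab := fiveTerm_mem (a' := a') (b' := a' * b / a) (s := 0)
      (t := a' * (a - b) / (a * (1 - a) ^ 2)) (r := a' * (a - b) / (b * (1 - a) ^ 2))
    ha0 ha1 hb0 hb1 hab
    rfl (by field_simp; ring) rfl (by field_simp; ring) rfl (by field_simp; ring)
  have hrel_ba := fiveTerm_mem (a' := a' * b / a) (b' := a') (u := a / b) (s := 0)
      (v := ((1 - b) / (1 - a))⁻¹)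
      (t := -(a' * (a - b) / (a * (1 - a) ^ 2) / ((1 - b) / (1 - a)) ^ 2))
      (w := (a * (1 - b) / (b * (1 - a)))⁻¹)
      (r := -(a' * (a - b) / (b * (1 - a) ^ 2) / (a * (1 - b) / (b * (1 - a))) ^ 2))
    hb0 hb1 ha0 ha1 (Ne.symm hab)
    rfl (by field_simp; ring) (by field_simp) (by field_simp; ring)
    (by field_simp) (by field_simp; ring)
  rw [bracket_zero_right] at hrel_ab hrel_ba
  convert add_mem hrel_ab hrel_ba using 1
  unfold inversionElement
  abel

lemma inversionElement_mul_sub_mem {v c : F} (t : F) (hv0 : v ≠ 0) (hv1 : v ≠ 1)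
    (hc0 : c ≠ 0) (hc1 : c ≠ 1) (hcv : c * v ≠ 1) :
    inversionElement F (c * v) (c * t) - inversionElement F v t ∈ fiveTermSubgroup F := by
  have hcv' : c * v - 1 ≠ 0 := sub_ne_zero.2 hcv
  have hv1' : v - 1 ≠ 0 := sub_ne_zero.2 hv1
  have hc1' : c - 1 ≠ 0 := sub_ne_zero.2 hc1
  set b := (v - 1) / (c * v - 1) with hb
  have h1b : 1 - b = v * (c - 1) / (c * v - 1) := by rw [hb, one_sub_div hcv']; ring
  have h1a : 1 - c * b = (c - 1) / (c * v - 1) := by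
    rw [hb, ← mul_div_assoc, one_sub_div hcv']; ring
  have hb0 : b ≠ 0 := div_ne_zero hv1' hcv'
  have hb1 : b ≠ 1 := fun h =>
    div_ne_zero (mul_ne_zero hv0 hc1') hcv' (by rw [← h1b, h, sub_self])
  have ha1 : c * b ≠ 1 := fun h => div_ne_zero hc1' hcv' (by rw [← h1a, h, sub_self])
  have hab : c * b ≠ b := fun h => hc1 (mul_right_cancel₀ hb0 (h.trans (one_mul b).symm))
  convert inversionElement_sub_mem (t * c * (1 - c * b) ^ 2 / (c - 1))
    (mul_ne_zero hc0 hb0) ha1 hb0 hb1 hab using 3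
  · rw [h1b, h1a]; field_simp
  · rw [h1a]; field_simp
  · rw [h1b, h1a, div_div_div_cancel_right₀ hcv', mul_div_cancel_right₀ _ hc1']
  · rw [h1a]; field_simp

end

section
variable {F : Type*} [Field F] [CharZero F]

lemma inversionElement_two_add_self_mem (s : F) :
    inversionElement F 2 s + inversionElement F 2 s ∈ fiveTermSubgroup F := by
  have h : fiveTermElement F (3/2) 3 (-(3 * s / 8)) 0
      + fiveTermElement F (-(1/2)) (-2) (3 * s / 8) 0
      + fiveTermElement F 3 (3/2) 0 (-(3 * s / 8))
      + fiveTermElement F (-2) (-(1/2)) 0 (3 * s / 8)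
      ∈ fiveTermSubgroup F := by
    refine add_mem (add_mem (add_mem ?_ ?_) ?_) ?_ <;> apply fiveTermElement_mem <;> norm_num
  convert h using 1
  simp only [fiveTermElement, inversionElement]
  ring_nf

lemma inversionElement_four_mem (w : F) : inversionElement F 4 w ∈ fiveTermSubgroup F := by
  have h : fiveTermElement F (3/2) 3 (-(w / 16)) (w / 4)
      + fiveTermElement F 3 (3/2) (w / 4) (-(w / 16))
      ∈ fiveTermSubgroup F := by
    refine add_mem ?_ ?_ <;> apply fiveTermElement_mem <;> norm_num
  convert sub_mem (inversionElement_two_add_self_mem (w / 4)) h using 1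
  simp only [fiveTermElement, inversionElement]
  ring_nf

lemma inversionElement_mem {y : F} (t : F) (hy0 : y ≠ 0) (hy1 : y ≠ 1) :
    inversionElement F y t ∈ fiveTermSubgroup F := by
  by_cases hy4 : y = 4
  · subst hy4
    exact inversionElement_four_mem t
  have hscale := inversionElement_mul_sub_mem (c := 4 / y) t hy0 hy1
    (div_ne_zero (by norm_num) hy0) (fun h => hy4 ((div_eq_one_iff_eq hy0).1 h).symm)
    (by rw [div_mul_cancel₀ _ hy0]; norm_num)
  rw [div_mul_cancel₀ _ hy0] at hscale
  simpa only [sub_sub_cancel] using sub_mem (inversionElement_four_mem (4 / y * t)) hscale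

end

lemma bracket_add_bracket_one_sub_add_inversionElement_mem {F : Type*} [Field F] {a b : F}
    (p : F) (ha0 : a ≠ 0) (ha1 : a ≠ 1) (hb0 : b ≠ 0) (hb1 : b ≠ 1) (hab : a ≠ b) :
    bracket F a p + bracket F (1 - a) (-p)
      + inversionElement F (a * (1 - b) / (b * (1 - a))) ((1 - b) * p / (b * (1 - a) ^ 2))
      ∈ fiveTermSubgroup F := by
  have ha1' : 1 - a ≠ 0 := sub_ne_zero.2 (Ne.symm ha1)
  have hb1' : 1 - b ≠ 0 := sub_ne_zero.2 (Ne.symm hb1)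
  have hrel := fiveTerm_mem (a' := p) (b' := 0) (s := -(b * p / a ^ 2))
      (t := (1 - b) * p / (1 - a) ^ 2) (r := (1 - b) * p / (b * (1 - a) ^ 2))
    ha0 ha1 hb0 hb1 hab rfl (by ring) rfl (by ring) rfl (by field_simp; ring)
  have hrel' := fiveTerm_mem (a' := -p) (b' := 0) (u := (1 - b) / (1 - a))
      (s := (1 - b) * p / (1 - a) ^ 2) (v := b / a) (t := -(b * p / a ^ 2))
      (w := (a * (1 - b) / (b * (1 - a)))⁻¹)
      (r := -((1 - b) * p / (b * (1 - a) ^ 2) / (a * (1 - b) / (b * (1 - a))) ^ 2))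
    ha1' (fun h => ha0 (by linear_combination -h)) hb1' (fun h => hb0 (by linear_combination -h))
    (sub_right_injective.ne hab) rfl (by ring)
    (by rw [sub_sub_cancel, sub_sub_cancel])
    (by rw [sub_sub_cancel, sub_sub_cancel]; ring)
    (by rw [sub_sub_cancel, sub_sub_cancel]; field_simp)
    (by rw [sub_sub_cancel, sub_sub_cancel]; field_simp; ring)
  rw [bracket_zero_right] at hrel hrel'
  convert add_mem hrel hrel' using 1
  unfold inversionElement
  abel

/-- The two-term relation `⟨a;b]₂ = −⟨1−a;−b]₂` holds in `TB₂(F)`. -/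
theorem two_term_relation (F : Type*) [Field F] [CharZero F]
    (a : F) (ha0 : a ≠ 0) (ha1 : a ≠ 1) (b : F) :
    bracket F a b + bracket F (1 - a) (-b) ∈ fiveTermSubgroup F := by
  classical
  obtain ⟨c, hc⟩ := Infinite.exists_notMem_finset ({0, 1, a} : Finset F)
  simp only [Finset.mem_insert, Finset.mem_singleton, not_or] at hc
  obtain ⟨hc0, hc1, hca⟩ := hc
  have ha1' : 1 - a ≠ 0 := sub_ne_zero.2 (Ne.symm ha1)
  have hx0 : a * (1 - c) / (c * (1 - a)) ≠ 0 :=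
    div_ne_zero (mul_ne_zero ha0 (sub_ne_zero.2 (Ne.symm hc1))) (mul_ne_zero hc0 ha1')
  have hx1 : a * (1 - c) / (c * (1 - a)) ≠ 1 := by
    rw [Ne, div_eq_one_iff_eq (mul_ne_zero hc0 ha1')]
    exact fun h => hca (by linear_combination -h)
  have hsum := bracket_add_bracket_one_sub_add_inversionElement_mem b ha0 ha1 hc0 hc1 (Ne.symm hca)
  exact (add_mem_cancel_right (inversionElement_mem _ hx0 hx1)).1 hsum

end
end
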